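/- Let ε ∈ ℝ, Δτ ≠ 0, and assume the linear instability condition: ε < 0 or ε > 2/(π(Δτ)²). Let t ∈ ℝ with cos(πt) ≠ 0 and set α = α(t). Then α² > 1, the two real numbers γ₊ = α + √(α² − 1) and γ₋ = α − √(α² − 1) are the eigenvalues of J̃(t) (they satisfy λ² − 2αλ + 1 = 0, where 2α is the trace and 1 the determinant of J̃(t)), γ₊·γ₋ = 1, and: if ε < 0 then γ₊ > 1, while if ε > 2/(π(Δτ)²) then γ₋ < −1. -/
import Mathlib


/-- `α(t) = 1 − πε(Δτ)²/cos²(πt)`. -/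
noncomputable def alphaT (ε Δτ t : ℝ) : ℝ :=
  1 - Real.pi * ε * Δτ ^ 2 / Real.cos (Real.pi * t) ^ 2

/-- The Jacobian `J̃(t)` of the map `T̃_{ε,Δτ}`: rows `(0, 1)` and `(−1, 2α(t))`. -/
noncomputable def Jtilde (ε Δτ t : ℝ) : Matrix (Fin 2) (Fin 2) ℝ :=
  !![0, 1; -1, 2 * alphaT ε Δτ t]

lemma eig_aux (M : Matrix (Fin 2) (Fin 2) ℝ) (μ : ℝ) (v : Fin 2 → ℝ) (hv : v ≠ 0)
    (h : M.mulVec v = μ • v) : Module.End.HasEigenvalue (Matrix.toLin' M) μ :=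
  Module.End.hasEigenvalue_of_hasEigenvector
    ⟨Module.End.mem_eigenspace_iff.2 (by simpa [Matrix.toLin'_apply] using h), hv⟩

/-- Under the linear instability condition, at any regular point `t`:
`α² > 1`; `γ₊ = α + √(α²−1)` and `γ₋ = α − √(α²−1)` are the eigenvalues of
`J̃(t)`, roots of `λ² − 2αλ + 1 = 0`, where `2α` is the trace and `1` the
determinant of `J̃(t)`; `γ₊γ₋ = 1`; if `ε < 0` then `γ₊ > 1`, and if
`ε > 2/(π(Δτ)²)` then `γ₋ < −1`. -/
theorem Jtilde_eigenvalues (ε Δτ : ℝ) (hΔτ : Δτ ≠ 0)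
    (hli : ε < 0 ∨ ε > 2 / (Real.pi * Δτ ^ 2))
    (t : ℝ) (ht : Real.cos (Real.pi * t) ≠ 0) :
    alphaT ε Δτ t ^ 2 > 1 ∧
    Matrix.trace (Jtilde ε Δτ t) = 2 * alphaT ε Δτ t ∧
    Matrix.det (Jtilde ε Δτ t) = 1 ∧
    (alphaT ε Δτ t + Real.sqrt (alphaT ε Δτ t ^ 2 - 1)) ^ 2
        - 2 * alphaT ε Δτ t * (alphaT ε Δτ t + Real.sqrt (alphaT ε Δτ t ^ 2 - 1)) + 1 = 0 ∧
    (alphaT ε Δτ t - Real.sqrt (alphaT ε Δτ t ^ 2 - 1)) ^ 2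
        - 2 * alphaT ε Δτ t * (alphaT ε Δτ t - Real.sqrt (alphaT ε Δτ t ^ 2 - 1)) + 1 = 0 ∧
    Module.End.HasEigenvalue (Matrix.toLin' (Jtilde ε Δτ t))
        (alphaT ε Δτ t + Real.sqrt (alphaT ε Δτ t ^ 2 - 1)) ∧
    Module.End.HasEigenvalue (Matrix.toLin' (Jtilde ε Δτ t))
        (alphaT ε Δτ t - Real.sqrt (alphaT ε Δτ t ^ 2 - 1)) ∧
    (alphaT ε Δτ t + Real.sqrt (alphaT ε Δτ t ^ 2 - 1)) *
        (alphaT ε Δτ t - Real.sqrt (alphaT ε Δτ t ^ 2 - 1)) = 1 ∧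
    (ε < 0 → alphaT ε Δτ t + Real.sqrt (alphaT ε Δτ t ^ 2 - 1) > 1) ∧
    (ε > 2 / (Real.pi * Δτ ^ 2) → alphaT ε Δτ t - Real.sqrt (alphaT ε Δτ t ^ 2 - 1) < -1) := by
  have hπ := Real.pi_pos
  have hc2 : 0 < Real.cos (Real.pi * t) ^ 2 := by positivity
  have hc1 : Real.cos (Real.pi * t) ^ 2 ≤ 1 := Real.cos_sq_le_one _
  set a := alphaT ε Δτ t with ha
  have haval : a = 1 - Real.pi * ε * Δτ ^ 2 / Real.cos (Real.pi * t) ^ 2 := rfl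
  have hΔ2 : 0 < Δτ ^ 2 := by positivity
  have hk1 : ε < 0 → 1 < a := by
    intro hε
    have : Real.pi * ε * Δτ ^ 2 / Real.cos (Real.pi * t) ^ 2 < 0 :=
      div_neg_of_neg_of_pos (by nlinarith [mul_pos hπ hΔ2]) hc2
    rw [haval]; linarith
  have hk2 : ε > 2 / (Real.pi * Δτ ^ 2) → a < -1 := by
    intro hε
    have h2 : 2 < Real.pi * ε * Δτ ^ 2 := by
      rw [gt_iff_lt, div_lt_iff₀ (by positivity)] at hε; nlinarith
    have hle : Real.pi * ε * Δτ ^ 2 ≤ Real.pi * ε * Δτ ^ 2 / Real.cos (Real.pi * t) ^ 2 := by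
      rw [le_div_iff₀ hc2]; nlinarith
    rw [haval]; linarith
  have ha1 : 1 < a ^ 2 := by
    rcases hli with h | h
    · nlinarith [hk1 h]
    · nlinarith [hk2 h]
  set s := Real.sqrt (a ^ 2 - 1) with hsdef
  have hs0 : 0 ≤ s := Real.sqrt_nonneg _
  have hs : s ^ 2 = a ^ 2 - 1 := Real.sq_sqrt (by linarith)
  have hq1 : (a + s) ^ 2 - 2 * a * (a + s) + 1 = 0 := by nlinarith
  have hq2 : (a - s) ^ 2 - 2 * a * (a - s) + 1 = 0 := by nlinarith
  have heig : ∀ μ : ℝ, μ ^ 2 - 2 * a * μ + 1 = 0 →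
      Module.End.HasEigenvalue (Matrix.toLin' (Jtilde ε Δτ t)) μ := by
    intro μ hμ
    apply eig_aux _ μ ![1, μ]
    · intro h
      have := congrFun h 0
      simp at this
    · funext i
      fin_cases i <;>
        simp [Jtilde, Matrix.mulVec, dotProduct, Fin.sum_univ_two, ← ha] <;>
        nlinarith
  refine ⟨ha1, ?_, ?_, hq1, hq2, heig _ hq1, heig _ hq2, by nlinarith, fun h => ?_, fun h => ?_⟩
  · simp [Jtilde, Matrix.trace_fin_two, ← ha]
  · simp [Jtilde, Matrix.det_fin_two_of, ← ha]
  · have := hk1 h; linarith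
  · have := hk2 h; linarith
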